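/- Let 0 < η_t ≤ η_{t−1}, set C_t = 13/2 + 1/η_t² − 1/(η_t η_{t−1}) and assume C_t ≥ 4. Let π_t be a probability vector on [K] with π_{t,i} > C_t² η_t² for all i, let ℓ_t ∈ [0,1]^K, and let u be any probability vector on [K]. Let π_{t+1}(a) denote the TS-Prod update of π_t when arm a is drawn. Then ⟨π_t − u, ℓ_t⟩ + (1/η_t)·Σ_{a=1}^K π_{t,a} D_TS(u, π_{t+1}(a)) − (1/η_t)·D_TS(u, π_t) ≤ Σ_{i=1}^K ((13/2)·η_t·√π_{t,i}·(1 − π_{t,i}) − (1/η_t − 1/η_{t−1})·(u_i − π_{t,i})/√π_{t,i}). -/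

import Mathlib

namespace Stmt8

/-- Biased masked TS-Prod loss
`ℓ̃_i(a) = (ℓ_i − η(C − (13/2)π_i)/√π_i)·1{a = i}`. -/
noncomputable def tl (K : ℕ) (η C : ℝ) (π ℓ : Fin K → ℝ) (a i : Fin K) : ℝ :=
  if a = i then ℓ i - η * (C - (13 / 2) * π i) / Real.sqrt (π i) else 0

/-- TS-Prod normalizer `λ_i(a) = π_i · Σ_j √π_j ℓ̃_j(a) / Σ_j π_j^{3/2}`. -/
noncomputable def lamTS (K : ℕ) (η C : ℝ) (π ℓ : Fin K → ℝ) (a i : Fin K) : ℝ :=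
  π i * (∑ j, Real.sqrt (π j) * tl K η C π ℓ a j) / ∑ j, Real.sqrt (π j) * π j

/-- TS-Prod one-step update
`π⁺_i(a) = π_i (1 − (2η/√π_i)(ℓ̃_i(a) − λ_i(a)))`. -/
noncomputable def updTS (K : ℕ) (η C : ℝ) (π ℓ : Fin K → ℝ) (a : Fin K) : Fin K → ℝ :=
  fun i => π i * (1 - (2 * η / Real.sqrt (π i)) * (tl K η C π ℓ a i - lamTS K η C π ℓ a i))

/-- Bregman divergence of the 1/2-Tsallis entropy potential
`D_TS(u, p) = −2Σ_i √u_i + 2Σ_i √p_i + Σ_i (u_i − p_i)/√p_i`. -/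
noncomputable def DTS (K : ℕ) (u p : Fin K → ℝ) : ℝ :=
  -2 * ∑ i, Real.sqrt (u i) + 2 * ∑ i, Real.sqrt (p i) +
    ∑ i, (u i - p i) / Real.sqrt (p i)

private lemma cube_le {x y : ℝ} (hx : 0 ≤ x) (hy : 0 ≤ y) (h : x ^ 3 ≤ y ^ 3) : x ≤ y := by
  by_contra hc
  push_neg at hc
  have hx0 : 0 < x := lt_of_le_of_lt hy hc
  nlinarith [mul_pos (sub_pos.2 hc) (mul_pos hx0 hx0), mul_nonneg (mul_nonneg hy hy) hy,
    mul_nonneg (mul_nonneg hy hy) hx, mul_pos hx0 hx0, sq_nonneg (x - y), sq_nonneg (x + y),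
    mul_nonneg hy hx]

private lemma sqrt_one_sub_le (x : ℝ) (hx : x ≤ 1) : Real.sqrt (1 - x) ≤ 1 - x / 2 := by
  have h : (1 : ℝ) - x ≤ (1 - x / 2) ^ 2 := by nlinarith [sq_nonneg x]
  calc Real.sqrt (1 - x) ≤ Real.sqrt ((1 - x / 2) ^ 2) := Real.sqrt_le_sqrt h
    _ = |1 - x / 2| := Real.sqrt_sq_eq_abs _
    _ = 1 - x / 2 := abs_of_nonneg (by linarith)

private lemma inv_sqrt_le (x : ℝ) (h1 : -(4 / 13) ≤ x) (h2 : x ≤ 4 / 13) :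
    1 / Real.sqrt (1 - x) ≤ 1 + x / 2 + (13 / 20) * x ^ 2 := by
  have hpos : (0 : ℝ) < 1 - x := by linarith
  have h3 : (0 : ℝ) ≤ 4 / 13 - x := by linarith
  have h4 : (0 : ℝ) ≤ x + 4 / 13 := by linarith
  have hR : (0 : ℝ) < 1 + x / 2 + (13 / 20) * x ^ 2 := by nlinarith [sq_nonneg x]
  have key : 1 ≤ (1 - x) * (1 + x / 2 + (13 / 20) * x ^ 2) ^ 2 := by
    nlinarith [sq_nonneg x, mul_nonneg h3 (sq_nonneg x), mul_nonneg h4 (sq_nonneg x),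
      sq_nonneg (x * (x - 1)), sq_nonneg (x ^ 2), mul_nonneg (mul_nonneg h3 h4) (sq_nonneg x),
      mul_nonneg (mul_nonneg h3 (sq_nonneg x)) (sq_nonneg x)]
  have hsq : 0 < Real.sqrt (1 - x) := Real.sqrt_pos.2 hpos
  rw [div_le_iff₀ hsq]
  calc (1 : ℝ) = Real.sqrt 1 := Real.sqrt_one.symm
    _ ≤ Real.sqrt ((1 - x) * (1 + x / 2 + (13 / 20) * x ^ 2) ^ 2) := Real.sqrt_le_sqrt key
    _ = Real.sqrt (1 - x) * Real.sqrt ((1 + x / 2 + (13 / 20) * x ^ 2) ^ 2) :=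
        Real.sqrt_mul hpos.le _
    _ = Real.sqrt (1 - x) * (1 + x / 2 + (13 / 20) * x ^ 2) := by
        rw [Real.sqrt_sq hR.le]
    _ = (1 + x / 2 + (13 / 20) * x ^ 2) * Real.sqrt (1 - x) := mul_comm _ _

private lemma lemP (a s : ℝ) (ha : 0 ≤ a) (hs : 0 ≤ s) :
    2 * s ^ 2 * (s ^ 2 + a ^ 2) ^ 2 ≤ 5 * (s ^ 3 + a ^ 3) ^ 2 := by
  nlinarith [sq_nonneg (s - a), sq_nonneg (s * a), mul_nonneg ha hs, sq_nonneg (s ^ 2 - a ^ 2),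
    sq_nonneg (s ^ 2 - s * a), sq_nonneg (s * a - a ^ 2),
    mul_nonneg (mul_nonneg hs hs) (mul_nonneg ha ha),
    mul_nonneg (mul_nonneg (mul_nonneg hs hs) hs) ha,
    mul_nonneg (mul_nonneg (mul_nonneg hs ha) ha) ha,
    sq_nonneg (s ^ 2 - 2 * s * a), sq_nonneg (2 * s ^ 2 - a ^ 2)]

private lemma l3core (α σ : ℝ) (hα : 0 ≤ α) (hσ : 0 ≤ σ) (hα1 : α ^ 2 ≤ 1)
    (hqσ : σ ^ 2 ≤ 1 - α ^ 2) :
    σ ^ 6 + α ^ 2 * σ ^ 4 ≤ 5 / 2 * (1 - α ^ 2) * (α ^ 3 + σ ^ 3) ^ 2 := by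
  have hP := lemP α σ hα hσ
  have t1 : 0 ≤ (1 - α ^ 2) * (5 * (σ ^ 3 + α ^ 3) ^ 2 - 2 * σ ^ 2 * (σ ^ 2 + α ^ 2) ^ 2) :=
    mul_nonneg (by linarith) (by linarith)
  have t2 : 0 ≤ σ ^ 2 * (σ ^ 2 + α ^ 2) * α ^ 2 * ((1 - α ^ 2) - σ ^ 2) :=
    mul_nonneg (mul_nonneg (mul_nonneg (sq_nonneg σ)
      (add_nonneg (sq_nonneg σ) (sq_nonneg α))) (sq_nonneg α)) (by linarith)
  nlinarith [t1, t2]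

private lemma pw (si ui ηt x : ℝ) (hsi : 0 < si) (hui : 0 ≤ ui) (hηt : 0 < ηt)
    (hdl : -(4 / 13) ≤ 2 * ηt / si * x) (hdu : 2 * ηt / si * x ≤ 4 / 13) :
    2 * (si * Real.sqrt (1 - 2 * ηt / si * x)) +
        (ui - si ^ 2 * (1 - 2 * ηt / si * x)) / (si * Real.sqrt (1 - 2 * ηt / si * x)) -
        (2 * si + (ui - si ^ 2) / si)
      ≤ ηt * (ui / si ^ 2 - 1) * x + 13 / 5 * ηt ^ 2 * ui / si ^ 3 * x ^ 2 := by
  set d0 : ℝ := 2 * ηt / si * x with hd0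
  have h1d : (0 : ℝ) < 1 - d0 := by linarith
  set e : ℝ := Real.sqrt (1 - d0) with he_def
  have hepos : 0 < e := Real.sqrt_pos.2 h1d
  have he2 : e ^ 2 = 1 - d0 := Real.sq_sqrt h1d.le
  have key1 : e ≤ 1 - d0 / 2 := sqrt_one_sub_le d0 (by linarith)
  have key2 : 1 / e ≤ 1 + d0 / 2 + (13 / 20) * d0 ^ 2 := inv_sqrt_le d0 hdl hdu
  have hid : 2 * (si * e) + (ui - si ^ 2 * (1 - d0)) / (si * e) - (2 * si + (ui - si ^ 2) / si)
      = si * (e - 1) + (ui / si) * (1 / e - 1) := by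
    rw [← he2]
    field_simp
    ring
  rw [hid]
  have b1 : si * (e - 1) ≤ si * (-(d0 / 2)) :=
    mul_le_mul_of_nonneg_left (by linarith) hsi.le
  have b2 : (ui / si) * (1 / e - 1) ≤ (ui / si) * (d0 / 2 + (13 / 20) * d0 ^ 2) :=
    mul_le_mul_of_nonneg_left (by linarith) (by positivity)
  have hfin : si * (-(d0 / 2)) + (ui / si) * (d0 / 2 + (13 / 20) * d0 ^ 2)
      = ηt * (ui / si ^ 2 - 1) * x + 13 / 5 * ηt ^ 2 * ui / si ^ 3 * x ^ 2 := by
    rw [hd0]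
    field_simp
    ring
  linarith [b1, b2]

set_option maxHeartbeats 3000000 in
/-- per-step stability bound for TS-Prod:
with `C_t = 13/2 + 1/η_t² − 1/(η_t η_{t−1}) ≥ 4` and `π_{t,i} > C_t² η_t²`,
`⟨π_t − u, ℓ_t⟩ + (1/η_t)·E_{a∼π_t}[D_TS(u, π_{t+1}(a))] − (1/η_t)·D_TS(u, π_t)`
is at most
`Σ_i ((13/2) η_t √π_{t,i} (1 − π_{t,i}) − (1/η_t − 1/η_{t−1})(u_i − π_{t,i})/√π_{t,i})`. -/
theorem stmt8 (K : ℕ) (ηt ηprev C : ℝ) (π u ℓ : Fin K → ℝ)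
    (hηt : 0 < ηt) (hηle : ηt ≤ ηprev)
    (hC : C = 13 / 2 + 1 / ηt ^ 2 - 1 / (ηt * ηprev)) (hC4 : 4 ≤ C)
    (hπnn : ∀ i, 0 ≤ π i) (hπsum : ∑ i, π i = 1)
    (hπlb : ∀ i, C ^ 2 * ηt ^ 2 < π i)
    (hℓ : ∀ i, ℓ i ∈ Set.Icc (0 : ℝ) 1)
    (hunn : ∀ i, 0 ≤ u i) (husum : ∑ i, u i = 1) :
    (∑ i, (π i - u i) * ℓ i) +
        (1 / ηt) * (∑ a, π a * DTS K u (updTS K ηt C π ℓ a)) -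
        (1 / ηt) * DTS K u π ≤
      ∑ i, ((13 / 2) * ηt * Real.sqrt (π i) * (1 - π i) -
        (1 / ηt - 1 / ηprev) * (u i - π i) / Real.sqrt (π i)) := by

  have hη2 : 0 < ηprev := lt_of_lt_of_le hηt hηle
  have hC2 : (13 : ℝ) / 2 ≤ C := by
    have h2 : 1 / (ηt * ηprev) ≤ 1 / ηt ^ 2 := by
      apply one_div_le_one_div_of_le (by positivity)
      nlinarith
    rw [hC]; linarith
  have hCpos : 0 < C := by linarith
  have hπpos : ∀ i, 0 < π i := fun i => lt_trans (by positivity) (hπlb i)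
  have hs2 : ∀ i, Real.sqrt (π i) ^ 2 = π i := fun i => Real.sq_sqrt (hπnn i)
  have hspos : ∀ i, 0 < Real.sqrt (π i) := fun i => Real.sqrt_pos.2 (hπpos i)
  have hπle1 : ∀ i, π i ≤ 1 := by
    intro i; rw [← hπsum]
    exact Finset.single_le_sum (fun j _ => hπnn j) (Finset.mem_univ i)
  have hCηs : ∀ i, C * ηt < Real.sqrt (π i) := by
    intro i
    by_contra hcon; push_neg at hcon
    have h1 : Real.sqrt (π i) ^ 2 ≤ (C * ηt) ^ 2 := by nlinarith [(hspos i).le]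
    rw [hs2 i] at h1
    nlinarith [hπlb i]
  have h2ηs : ∀ i, 2 * ηt / Real.sqrt (π i) ≤ 4 / 13 := by
    intro i
    rw [div_le_iff₀ (hspos i)]
    nlinarith [hCηs i, mul_le_mul_of_nonneg_right hC2 hηt.le]
  -- the loss-with-bias vector
  obtain ⟨m, hm_def⟩ : ∃ m : Fin K → ℝ,
      m = fun a => ℓ a - ηt * (C - 13 / 2 * π a) / Real.sqrt (π a) := ⟨_, rfl⟩
  have hbias_nn : ∀ a, 0 ≤ ηt * (C - 13 / 2 * π a) / Real.sqrt (π a) := by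
    intro a
    apply div_nonneg _ (hspos a).le
    have : 13 / 2 * π a ≤ 13 / 2 := by nlinarith [hπle1 a]
    nlinarith
  have hmU : ∀ a, m a ≤ 1 := by
    intro a
    have h2 := (hℓ a).2
    have h0 := hbias_nn a
    simp only [hm_def]
    linarith
  have hmL : ∀ a, -1 ≤ m a := by
    intro a
    have h1 : ηt * (C - 13 / 2 * π a) / Real.sqrt (π a) ≤ ηt * C / Real.sqrt (π a) := by
      apply (div_le_div_iff_of_pos_right (hspos a)).2
      nlinarith [hπnn a]
    have h2 : ηt * C / Real.sqrt (π a) ≤ 1 := by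
      rw [div_le_one (hspos a)]
      nlinarith [hCηs a]
    have h3 := (hℓ a).1
    simp only [hm_def]
    linarith
  have hmabs : ∀ a, |m a| ≤ 1 := fun a => abs_le.2 ⟨hmL a, hmU a⟩
  -- S and nonemptiness
  have hne : (Finset.univ : Finset (Fin K)).Nonempty := by
    rcases Finset.univ.eq_empty_or_nonempty (α := Fin K) with h | h
    · exfalso; rw [h, Finset.sum_empty] at hπsum; norm_num at hπsum
    · exact h
  obtain ⟨S, hS_def⟩ : ∃ S : ℝ, S = ∑ j, Real.sqrt (π j) * π j := ⟨_, rfl⟩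
  have hSpos : 0 < S := by
    rw [hS_def]
    exact Finset.sum_pos (fun j _ => mul_pos (hspos j) (hπpos j)) hne
  have hsum_tl : ∀ a, (∑ j, Real.sqrt (π j) * tl K ηt C π ℓ a j) = Real.sqrt (π a) * m a := by
    intro a
    simp only [tl, mul_ite, mul_zero]
    rw [Finset.sum_ite_eq]
    simp [hm_def]
  have hlam : ∀ a i, lamTS K ηt C π ℓ a i = π i * (Real.sqrt (π a) * m a) / S := by
    intro a i; rw [lamTS, hsum_tl, ← hS_def]
  obtain ⟨X, hX_def⟩ : ∃ X : Fin K → Fin K → ℝ,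
      X = fun i a => tl K ηt C π ℓ a i - lamTS K ηt C π ℓ a i := ⟨_, rfl⟩
  have hXval : ∀ i a, X i a = (if a = i then m i else 0) - π i * (Real.sqrt (π a) * m a) / S := by
    intro i a
    simp only [hX_def, tl, hlam, hm_def]
  have hπsS : ∀ i a, π i * Real.sqrt (π a) ≤ S := by
    intro i a
    rw [hS_def]
    have hterm : ∀ j, (j : Fin K) ∈ Finset.univ → 0 ≤ Real.sqrt (π j) * π j :=
      fun j _ => (mul_pos (hspos j) (hπpos j)).le
    rcases le_total (Real.sqrt (π i)) (Real.sqrt (π a)) with h | h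
    · have hpa : π i ≤ π a := by
        nlinarith [hs2 i, hs2 a, (hspos i).le, (hspos a).le]
      have h1 : π i * Real.sqrt (π a) ≤ Real.sqrt (π a) * π a := by
        rw [mul_comm]
        exact mul_le_mul_of_nonneg_left hpa (Real.sqrt_nonneg _)
      exact le_trans h1 (Finset.single_le_sum hterm (Finset.mem_univ a))
    · have h1 : π i * Real.sqrt (π a) ≤ Real.sqrt (π i) * π i := by
        rw [mul_comm (Real.sqrt (π i)) (π i)]
        exact mul_le_mul_of_nonneg_left h (hπnn i)
      exact le_trans h1 (Finset.single_le_sum hterm (Finset.mem_univ i))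
  have hX1 : ∀ i a, |X i a| ≤ 1 := by
    intro i a
    rw [hXval]
    by_cases h : a = i
    · subst h
      rw [if_pos rfl]
      have hrw : m a - π a * (Real.sqrt (π a) * m a) / S
          = m a * (1 - π a * Real.sqrt (π a) / S) := by
        field_simp
      rw [hrw, abs_mul]
      have ht0 : 0 ≤ π a * Real.sqrt (π a) / S :=
        div_nonneg (mul_nonneg (hπnn a) (Real.sqrt_nonneg _)) hSpos.le
      have ht1 : π a * Real.sqrt (π a) / S ≤ 1 := (div_le_one hSpos).2 (hπsS a a)
      have habs2 : |1 - π a * Real.sqrt (π a) / S| ≤ 1 := abs_le.2 ⟨by linarith, by linarith⟩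
      calc |m a| * |1 - π a * Real.sqrt (π a) / S| ≤ 1 * 1 :=
            mul_le_mul (hmabs a) habs2 (abs_nonneg _) zero_le_one
        _ = 1 := by norm_num
    · rw [if_neg h, zero_sub, abs_neg, abs_div, abs_of_pos hSpos]
      rw [div_le_one hSpos]
      have h1 : |π i * (Real.sqrt (π a) * m a)| = π i * Real.sqrt (π a) * |m a| := by
        rw [abs_mul, abs_mul, abs_of_nonneg (hπnn i), abs_of_nonneg (Real.sqrt_nonneg _)]
        ring
      rw [h1]
      calc π i * Real.sqrt (π a) * |m a| ≤ π i * Real.sqrt (π a) * 1 :=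
            mul_le_mul_of_nonneg_left (hmabs a)
              (mul_nonneg (hπnn i) (Real.sqrt_nonneg _))
        _ = π i * Real.sqrt (π a) := by ring
        _ ≤ S := hπsS i a
  have hdabs : ∀ i a, |2 * ηt / Real.sqrt (π i) * X i a| ≤ 4 / 13 := by
    intro i a
    have hpos2 : (0:ℝ) < 2 * ηt / Real.sqrt (π i) :=
      div_pos (by linarith) (hspos i)
    rw [abs_mul, abs_of_pos hpos2]
    calc 2 * ηt / Real.sqrt (π i) * |X i a| ≤ 2 * ηt / Real.sqrt (π i) * 1 :=
          mul_le_mul_of_nonneg_left (hX1 i a) hpos2.le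
      _ = 2 * ηt / Real.sqrt (π i) := by ring
      _ ≤ 4 / 13 := h2ηs i
  have hupd : ∀ a i, updTS K ηt C π ℓ a i
      = π i * (1 - 2 * ηt / Real.sqrt (π i) * X i a) := by
    intro a i
    simp only [updTS, hX_def]
  -- pointwise bound
  have hPW : ∀ i a,
      2 * Real.sqrt (updTS K ηt C π ℓ a i) +
          (u i - updTS K ηt C π ℓ a i) / Real.sqrt (updTS K ηt C π ℓ a i) -
          (2 * Real.sqrt (π i) + (u i - π i) / Real.sqrt (π i))
        ≤ ηt * (u i / π i - 1) * X i a
          + (13 / 5) * ηt ^ 2 * u i / Real.sqrt (π i) ^ 3 * (X i a) ^ 2 := by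
    intro i a
    obtain ⟨hdl, hdu⟩ := abs_le.1 (hdabs i a)
    have h1d : (0:ℝ) < 1 - 2 * ηt / Real.sqrt (π i) * X i a := by linarith
    have hup : updTS K ηt C π ℓ a i
        = π i * (1 - 2 * ηt / Real.sqrt (π i) * X i a) := hupd a i
    have hsq : Real.sqrt (updTS K ηt C π ℓ a i)
        = Real.sqrt (π i) * Real.sqrt (1 - 2 * ηt / Real.sqrt (π i) * X i a) := by
      rw [hup, Real.sqrt_mul (hπnn i)]
    have hkey := pw (Real.sqrt (π i)) (u i) ηt (X i a) (hspos i) (hunn i) hηt hdl hdu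
    rw [hsq, hup]
    calc 2 * (Real.sqrt (π i) * Real.sqrt (1 - 2 * ηt / Real.sqrt (π i) * X i a)) +
          (u i - π i * (1 - 2 * ηt / Real.sqrt (π i) * X i a)) /
            (Real.sqrt (π i) * Real.sqrt (1 - 2 * ηt / Real.sqrt (π i) * X i a)) -
          (2 * Real.sqrt (π i) + (u i - π i) / Real.sqrt (π i))
        = 2 * (Real.sqrt (π i) * Real.sqrt (1 - 2 * ηt / Real.sqrt (π i) * X i a)) +
          (u i - Real.sqrt (π i) ^ 2 * (1 - 2 * ηt / Real.sqrt (π i) * X i a)) /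
            (Real.sqrt (π i) * Real.sqrt (1 - 2 * ηt / Real.sqrt (π i) * X i a)) -
          (2 * Real.sqrt (π i) + (u i - Real.sqrt (π i) ^ 2) / Real.sqrt (π i)) := by
          rw [hs2 i]
      _ ≤ ηt * (u i / Real.sqrt (π i) ^ 2 - 1) * X i a
          + (13 / 5) * ηt ^ 2 * u i / Real.sqrt (π i) ^ 3 * (X i a) ^ 2 := hkey
      _ = ηt * (u i / π i - 1) * X i a
          + (13 / 5) * ηt ^ 2 * u i / Real.sqrt (π i) ^ 3 * (X i a) ^ 2 := by
          rw [hs2 i]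
  -- divergence difference as a sum
  have hDdiff : ∀ a, DTS K u (updTS K ηt C π ℓ a) - DTS K u π
      = ∑ i, (2 * Real.sqrt (updTS K ηt C π ℓ a i) +
          (u i - updTS K ηt C π ℓ a i) / Real.sqrt (updTS K ηt C π ℓ a i) -
          (2 * Real.sqrt (π i) + (u i - π i) / Real.sqrt (π i))) := by
    intro a
    rw [DTS, DTS]
    rw [Finset.sum_sub_distrib, Finset.sum_add_distrib, Finset.sum_add_distrib,
      ← Finset.mul_sum, ← Finset.mul_sum]
    ring
  have hXa : ∀ i, ∑ a, π a * X i a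
      = π i * m i - π i * ((∑ a, π a * (Real.sqrt (π a) * m a)) / S) := by
    intro i
    have h1 : ∀ a, π a * X i a
        = π a * (if a = i then m i else 0) - π i / S * (π a * (Real.sqrt (π a) * m a)) := by
      intro a
      rw [hXval]
      ring
    rw [Finset.sum_congr rfl fun a _ => h1 a, Finset.sum_sub_distrib]
    congr 1
    · simp only [mul_ite, mul_zero]
      rw [Finset.sum_ite_eq']
      simp
    · rw [← Finset.mul_sum]
      ring
  have hswap : ∀ (f : Fin K → Fin K → ℝ), ∑ a, π a * ∑ i, f i a = ∑ i, ∑ a, π a * f i a := by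
    intro f
    calc ∑ a, π a * ∑ i, f i a = ∑ a, ∑ i, π a * f i a := by
          apply Finset.sum_congr rfl; intro a _; rw [Finset.mul_sum]
      _ = ∑ i, ∑ a, π a * f i a := Finset.sum_comm
  have hsum0 : ∑ i, (u i - π i) = 0 := by
    rw [Finset.sum_sub_distrib, husum, hπsum]; ring
  have hWcancel : ∑ i, ηt * ((u i - π i) * (m i - (∑ a, π a * (Real.sqrt (π a) * m a)) / S))
      = ηt * ∑ i, (u i - π i) * m i := by
    have h1 : ∀ i, ηt * ((u i - π i) * (m i - (∑ a, π a * (Real.sqrt (π a) * m a)) / S))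
        = ηt * ((u i - π i) * m i)
          - (ηt * ((∑ a, π a * (Real.sqrt (π a) * m a)) / S)) * (u i - π i) := by
      intro i; ring
    rw [Finset.sum_congr rfl fun i _ => h1 i, Finset.sum_sub_distrib, ← Finset.mul_sum,
      ← Finset.mul_sum, hsum0, mul_zero, sub_zero]

  -- (L3) second-moment bound
  have hL3 : ∀ i, (∑ a, π a * (X i a) ^ 2) ≤ 5 / 2 * π i * (1 - π i) := by
    intro i
    obtain ⟨T, hT_def⟩ : ∃ T : ℝ, T = ∑ a ∈ Finset.univ \ {i}, Real.sqrt (π a) * π a :=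
      ⟨_, rfl⟩
    have hTnn : 0 ≤ T := by
      rw [hT_def]
      exact Finset.sum_nonneg fun a _ => (mul_pos (hspos a) (hπpos a)).le
    have hST : S = T + Real.sqrt (π i) * π i := by
      rw [hS_def, hT_def, Finset.sum_eq_sum_sdiff_singleton_add (Finset.mem_univ i)]
    have hq : ∑ a ∈ Finset.univ \ {i}, π a = 1 - π i := by
      have h := Finset.sum_eq_sum_sdiff_singleton_add (Finset.mem_univ i) π
      rw [hπsum] at h
      linarith
    have hqnn : (0:ℝ) ≤ 1 - π i := by linarith [hπle1 i]
    set b : ℝ := Real.sqrt (1 - π i) with hb_def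
    have hbnn : 0 ≤ b := Real.sqrt_nonneg _
    have hb2 : b ^ 2 = 1 - π i := Real.sq_sqrt hqnn
    set σ : ℝ := T ^ ((1:ℝ)/3) with hσ_def
    have hσnn : 0 ≤ σ := Real.rpow_nonneg hTnn _
    have hσ3 : σ ^ 3 = T := by
      rw [hσ_def, ← Real.rpow_natCast (T ^ ((1:ℝ)/3)) 3, ← Real.rpow_mul hTnn]
      norm_num
    have hπaq : ∀ a ∈ Finset.univ \ {i}, π a ≤ 1 - π i := by
      intro a ha
      rw [← hq]
      exact Finset.single_le_sum (fun j _ => hπnn j) ha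
    have hTb : T ≤ b ^ 3 := by
      rw [hT_def]
      calc ∑ a ∈ Finset.univ \ {i}, Real.sqrt (π a) * π a
          ≤ ∑ a ∈ Finset.univ \ {i}, b * π a := by
            apply Finset.sum_le_sum
            intro a ha
            apply mul_le_mul_of_nonneg_right _ (hπnn a)
            rw [hb_def]
            exact Real.sqrt_le_sqrt (hπaq a ha)
        _ = b * (1 - π i) := by rw [← Finset.mul_sum, hq]
        _ = b ^ 3 := by rw [← hb2]; ring
    have hσb : σ ≤ b := cube_le hσnn hbnn (by rw [hσ3]; exact hTb)
    have hsaσ : ∀ a ∈ Finset.univ \ {i}, Real.sqrt (π a) ≤ σ := by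
      intro a ha
      apply cube_le (Real.sqrt_nonneg _) hσnn
      rw [hσ3]
      have h3 : Real.sqrt (π a) ^ 3 = Real.sqrt (π a) * π a := by
        rw [pow_succ, hs2 a, mul_comm]
      rw [h3, hT_def]
      exact Finset.single_le_sum (fun j _ => (mul_pos (hspos j) (hπpos j)).le) ha
    have hSqSum : ∑ a ∈ Finset.univ \ {i}, π a ^ 2 ≤ T * σ := by
      calc ∑ a ∈ Finset.univ \ {i}, π a ^ 2
          ≤ ∑ a ∈ Finset.univ \ {i}, (Real.sqrt (π a) * π a) * σ := by
            apply Finset.sum_le_sum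
            intro a ha
            have h4 : π a ^ 2 = (Real.sqrt (π a) * π a) * Real.sqrt (π a) := by
              obtain ⟨sa, hsa_def⟩ : ∃ sa : ℝ, sa = Real.sqrt (π a) := ⟨_, rfl⟩
              rw [← hsa_def, ← (hsa_def ▸ hs2 a : sa ^ 2 = π a)]; ring
            rw [h4]
            exact mul_le_mul_of_nonneg_left (hsaσ a ha) (mul_pos (hspos a) (hπpos a)).le
        _ = T * σ := by rw [← Finset.sum_mul, ← hT_def]
    have hEdecomp : (∑ a, π a * (X i a) ^ 2)
        = (∑ a ∈ Finset.univ \ {i}, π a * (X i a) ^ 2) + π i * (X i i) ^ 2 :=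
      Finset.sum_eq_sum_sdiff_singleton_add (Finset.mem_univ i) _
    have hoff : ∀ a ∈ Finset.univ \ {i}, π a * (X i a) ^ 2 ≤ π i ^ 2 / S ^ 2 * π a ^ 2 := by
      intro a ha
      have hai : a ≠ i := by
        rcases Finset.mem_sdiff.1 ha with ⟨-, h2⟩
        simpa using h2
      rw [hXval, if_neg hai, zero_sub]
      have hma2 : (m a) ^ 2 ≤ 1 := by nlinarith [hmL a, hmU a]
      have h5 : π a * (-(π i * (Real.sqrt (π a) * m a) / S)) ^ 2
          = π i ^ 2 / S ^ 2 * (π a ^ 2 * (m a) ^ 2) := by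
        obtain ⟨sa, hsa_def⟩ : ∃ sa : ℝ, sa = Real.sqrt (π a) := ⟨_, rfl⟩
        rw [← hsa_def, ← (hsa_def ▸ hs2 a : sa ^ 2 = π a)]
        field_simp
      rw [h5]
      have h6 : π a ^ 2 * (m a) ^ 2 ≤ π a ^ 2 := by nlinarith [sq_nonneg (π a)]
      apply mul_le_mul_of_nonneg_left h6 (by positivity)
    have hdiag : π i * (X i i) ^ 2 ≤ π i * (T / S) ^ 2 := by
      rw [hXval, if_pos rfl]
      have h1 : m i - π i * (Real.sqrt (π i) * m i) / S = m i * (T / S) := by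
        rw [hST]
        have hS0 : T + Real.sqrt (π i) * π i ≠ 0 := by
          rw [← hST]; exact ne_of_gt hSpos
        rw [div_eq_mul_inv, div_eq_mul_inv]
        have hinv := mul_inv_cancel₀ hS0
        linear_combination (-(m i)) * hinv
      rw [h1]
      have hmi2 : (m i) ^ 2 ≤ 1 := by nlinarith [hmL i, hmU i]
      have h2 : (m i * (T / S)) ^ 2 = (m i) ^ 2 * (T / S) ^ 2 := by ring
      rw [h2]
      apply mul_le_mul_of_nonneg_left _ (hπnn i)
      nlinarith [sq_nonneg (T / S)]
    have hE1 : (∑ a, π a * (X i a) ^ 2) ≤ π i ^ 2 / S ^ 2 * (T * σ) + π i * (T / S) ^ 2 := by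
      rw [hEdecomp]
      have h7 : (∑ a ∈ Finset.univ \ {i}, π a * (X i a) ^ 2)
          ≤ π i ^ 2 / S ^ 2 * (T * σ) := by
        calc (∑ a ∈ Finset.univ \ {i}, π a * (X i a) ^ 2)
            ≤ ∑ a ∈ Finset.univ \ {i}, π i ^ 2 / S ^ 2 * π a ^ 2 := Finset.sum_le_sum hoff
          _ = π i ^ 2 / S ^ 2 * ∑ a ∈ Finset.univ \ {i}, π a ^ 2 := by
              rw [Finset.mul_sum]
          _ ≤ π i ^ 2 / S ^ 2 * (T * σ) := by
              apply mul_le_mul_of_nonneg_left hSqSum (by positivity)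
      linarith [hdiag]
    have hσ2b : σ ^ 2 ≤ 1 - π i := by nlinarith [hσb, hσnn, hbnn, hb2]
    have hkey := l3core (Real.sqrt (π i)) σ (Real.sqrt_nonneg _) hσnn
      (by rw [hs2 i]; exact hπle1 i) (by rw [hs2 i]; exact hσ2b)
    rw [hs2 i] at hkey
    have hSσ : Real.sqrt (π i) ^ 3 + σ ^ 3 = S := by
      have h8 : Real.sqrt (π i) ^ 3 = Real.sqrt (π i) * π i := by
        rw [pow_succ, hs2 i, mul_comm]
      rw [h8, hσ3, hST]; ring
    rw [hSσ] at hkey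
    -- finish
    have hTσ : T * σ = σ ^ 4 := by rw [← hσ3]; ring
    have hT2 : T ^ 2 = σ ^ 6 := by rw [← hσ3]; ring
    have hS2pos : (0:ℝ) < S ^ 2 := by positivity
    have hfin : π i ^ 2 / S ^ 2 * (T * σ) + π i * (T / S) ^ 2 ≤ 5 / 2 * π i * (1 - π i) := by
      rw [div_pow, hT2, hTσ]
      rw [show π i ^ 2 / S ^ 2 * σ ^ 4 + π i * (σ ^ 6 / S ^ 2)
          = π i * (σ ^ 6 + π i * σ ^ 4) / S ^ 2 by field_simp; ring]
      rw [div_le_iff₀ hS2pos]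
      calc π i * (σ ^ 6 + π i * σ ^ 4) ≤ π i * (5 / 2 * (1 - π i) * S ^ 2) :=
            mul_le_mul_of_nonneg_left hkey (hπnn i)
        _ = 5 / 2 * π i * (1 - π i) * S ^ 2 := by ring
    linarith [hE1]
  -- rate identity
  have hrate : 1 / ηt - 1 / ηprev = ηt * (C - 13 / 2) := by
    rw [hC]
    field_simp
    ring
  -- per-coordinate final inequality
  have hPI : ∀ i, (π i - u i) * ℓ i + ((u i - π i) * m i
        + 13 / 5 * ηt * u i / Real.sqrt (π i) ^ 3 * (∑ a, π a * (X i a) ^ 2))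
      ≤ 13 / 2 * ηt * Real.sqrt (π i) * (1 - π i)
        - (1 / ηt - 1 / ηprev) * (u i - π i) / Real.sqrt (π i) := by
    intro i
    rw [hrate]
    have hEb : 13 / 5 * ηt * u i / Real.sqrt (π i) ^ 3 * (∑ a, π a * (X i a) ^ 2)
        ≤ 13 / 2 * ηt * u i * (1 - π i) / Real.sqrt (π i) := by
      calc 13 / 5 * ηt * u i / Real.sqrt (π i) ^ 3 * (∑ a, π a * (X i a) ^ 2)
          ≤ 13 / 5 * ηt * u i / Real.sqrt (π i) ^ 3 * (5 / 2 * π i * (1 - π i)) := by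
            apply mul_le_mul_of_nonneg_left (hL3 i)
            apply div_nonneg _ (by positivity)
            have := hunn i
            positivity
        _ = 13 / 2 * ηt * u i * (1 - π i) / Real.sqrt (π i) := by
            obtain ⟨si, hsi_def⟩ : ∃ si : ℝ, si = Real.sqrt (π i) := ⟨_, rfl⟩
            have hsi2 : si ^ 2 = π i := hsi_def ▸ hs2 i
            have hsipos : 0 < si := hsi_def ▸ hspos i
            rw [← hsi_def, ← hsi2]
            field_simp
    have hID : (π i - u i) * ℓ i + (u i - π i) * m i
          + 13 / 2 * ηt * u i * (1 - π i) / Real.sqrt (π i)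
        = 13 / 2 * ηt * Real.sqrt (π i) * (1 - π i)
          - ηt * (C - 13 / 2) * (u i - π i) / Real.sqrt (π i) := by
      simp only [hm_def]
      obtain ⟨si, hsi_def⟩ : ∃ si : ℝ, si = Real.sqrt (π i) := ⟨_, rfl⟩
      have hsi2 : si ^ 2 = π i := hsi_def ▸ hs2 i
      have hsipos : 0 < si := hsi_def ▸ hspos i
      rw [← hsi_def, ← hsi2]
      field_simp
      ring
    linarith [hEb, hID]
  -- pointwise bound function
  obtain ⟨G, hG_def⟩ : ∃ G : Fin K → Fin K → ℝ, G = fun i a => ηt * (u i / π i - 1) * X i a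
      + 13 / 5 * ηt ^ 2 * u i / Real.sqrt (π i) ^ 3 * (X i a) ^ 2 := ⟨_, rfl⟩
  have hPW' : ∀ i a,
      2 * Real.sqrt (updTS K ηt C π ℓ a i) +
          (u i - updTS K ηt C π ℓ a i) / Real.sqrt (updTS K ηt C π ℓ a i) -
          (2 * Real.sqrt (π i) + (u i - π i) / Real.sqrt (π i)) ≤ G i a := by
    intro i a
    rw [hG_def]
    exact hPW i a
  have hmono : ∑ a, π a * (DTS K u (updTS K ηt C π ℓ a) - DTS K u π)
      ≤ ∑ a, π a * ∑ i, G i a := by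
    apply Finset.sum_le_sum
    intro a _
    rw [hDdiff a]
    exact mul_le_mul_of_nonneg_left (Finset.sum_le_sum fun i _ => hPW' i a) (hπnn a)
  have hinnerG : ∀ i, ∑ a, π a * G i a
      = ηt * ((u i - π i) * (m i - (∑ a, π a * (Real.sqrt (π a) * m a)) / S))
        + 13 / 5 * ηt ^ 2 * u i / Real.sqrt (π i) ^ 3 * (∑ a, π a * (X i a) ^ 2) := by
    intro i
    have h1 : ∀ a, π a * G i a
        = ηt * (u i / π i - 1) * (π a * X i a)
          + 13 / 5 * ηt ^ 2 * u i / Real.sqrt (π i) ^ 3 * (π a * (X i a) ^ 2) := by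
      intro a
      rw [hG_def]
      ring
    rw [Finset.sum_congr rfl fun a _ => h1 a, Finset.sum_add_distrib,
      ← Finset.mul_sum, ← Finset.mul_sum, hXa i]
    have hπi := hπpos i
    have h2 : ηt * (u i / π i - 1) *
        (π i * m i - π i * ((∑ a, π a * (Real.sqrt (π a) * m a)) / S))
        = ηt * ((u i - π i) * (m i - (∑ a, π a * (Real.sqrt (π a) * m a)) / S)) := by
      field_simp
    rw [h2]
  have hrearr : ∑ a, π a * ∑ i, G i a
      = ηt * (∑ i, (u i - π i) * m i)
        + ∑ i, 13 / 5 * ηt ^ 2 * u i / Real.sqrt (π i) ^ 3 * (∑ a, π a * (X i a) ^ 2) := by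
    rw [hswap G, Finset.sum_congr rfl fun i _ => hinnerG i, Finset.sum_add_distrib, hWcancel]
  -- put everything together
  have hstep1 : ∑ a, π a * DTS K u π = DTS K u π := by
    rw [← Finset.sum_mul, hπsum, one_mul]
  have htotal : (1 / ηt) * (∑ a, π a * DTS K u (updTS K ηt C π ℓ a)) - 1 / ηt * DTS K u π
      = 1 / ηt * ∑ a, π a * (DTS K u (updTS K ηt C π ℓ a) - DTS K u π) := by
    rw [show ∑ a, π a * (DTS K u (updTS K ηt C π ℓ a) - DTS K u π)
        = (∑ a, π a * DTS K u (updTS K ηt C π ℓ a)) - ∑ a, π a * DTS K u π by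
      rw [← Finset.sum_sub_distrib]
      exact Finset.sum_congr rfl fun a _ => by ring]
    rw [hstep1]
    ring
  have hηinv : (0:ℝ) ≤ 1 / ηt := by positivity
  have hchain : 1 / ηt * ∑ a, π a * (DTS K u (updTS K ηt C π ℓ a) - DTS K u π)
      ≤ ∑ i, ((u i - π i) * m i
        + 13 / 5 * ηt * u i / Real.sqrt (π i) ^ 3 * (∑ a, π a * (X i a) ^ 2)) := by
    calc 1 / ηt * ∑ a, π a * (DTS K u (updTS K ηt C π ℓ a) - DTS K u π)
        ≤ 1 / ηt * ∑ a, π a * ∑ i, G i a := mul_le_mul_of_nonneg_left hmono hηinv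
      _ = 1 / ηt * (ηt * (∑ i, (u i - π i) * m i)
          + ∑ i, 13 / 5 * ηt ^ 2 * u i / Real.sqrt (π i) ^ 3 * (∑ a, π a * (X i a) ^ 2)) := by
          rw [hrearr]
      _ = ∑ i, ((u i - π i) * m i
          + 13 / 5 * ηt * u i / Real.sqrt (π i) ^ 3 * (∑ a, π a * (X i a) ^ 2)) := by
          have hηne : ηt ≠ 0 := ne_of_gt hηt
          rw [Finset.sum_add_distrib, mul_add]
          congr 1
          · field_simp
          · rw [Finset.mul_sum]
            apply Finset.sum_congr rfl
            intro i _
            have hsne : Real.sqrt (π i) ≠ 0 := ne_of_gt (hspos i)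
            field_simp
  calc (∑ i, (π i - u i) * ℓ i) +
        (1 / ηt) * (∑ a, π a * DTS K u (updTS K ηt C π ℓ a)) - 1 / ηt * DTS K u π
      = (∑ i, (π i - u i) * ℓ i) +
        ((1 / ηt) * (∑ a, π a * DTS K u (updTS K ηt C π ℓ a)) - 1 / ηt * DTS K u π) := by
        ring
    _ = (∑ i, (π i - u i) * ℓ i) +
        1 / ηt * ∑ a, π a * (DTS K u (updTS K ηt C π ℓ a) - DTS K u π) := by rw [htotal]
    _ ≤ (∑ i, (π i - u i) * ℓ i) + ∑ i, ((u i - π i) * m i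
          + 13 / 5 * ηt * u i / Real.sqrt (π i) ^ 3 * (∑ a, π a * (X i a) ^ 2)) := by
        linarith [hchain]
    _ = ∑ i, ((π i - u i) * ℓ i + ((u i - π i) * m i
          + 13 / 5 * ηt * u i / Real.sqrt (π i) ^ 3 * (∑ a, π a * (X i a) ^ 2))) := by
        rw [← Finset.sum_add_distrib]
    _ ≤ ∑ i, (13 / 2 * ηt * Real.sqrt (π i) * (1 - π i)
          - (1 / ηt - 1 / ηprev) * (u i - π i) / Real.sqrt (π i)) :=
        Finset.sum_le_sum fun i _ => hPI i

end Stmt8
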